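/- Let m ≥ 2 and let k, r be integers with 1 ≤ k and r ≥ 2k−1. Then the number of paths of length t = 2k−1 in the perfect rooted m-ary tree of depth r equals m^(2k−2) · ( (m^(r−k+2) − 1)/(m−1) − k ). -/

import Mathlib

open SimpleGraph Finset

/-- `IsPerfectRootedMary m r H ρ` says that `H` is the perfect rooted `m`-ary tree of
depth `r` with root `ρ`: a tree whose root `ρ` has degree `m`, in which every other
vertex has degree `1` or `m + 1`, whose maximum distance from `ρ` to a vertex is `r`,
and in which every degree-`1` vertex is at distance exactly `r` from `ρ`.
(For `r = 0` the root-degree condition is dropped, so that the one-vertex tree is the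
perfect rooted tree of depth `0`.) -/
def IsPerfectRootedMary (m r : ℕ) {W : Type} [Fintype W] (H : SimpleGraph W)
    [DecidableRel H.Adj] (ρ : W) : Prop :=
  H.IsTree ∧
    (0 < r → H.degree ρ = m) ∧
    (∀ v : W, v ≠ ρ → H.degree v = 1 ∨ H.degree v = m + 1) ∧
    (∀ v : W, H.dist ρ v ≤ r) ∧
    (∃ v : W, H.dist ρ v = r) ∧
    (∀ v : W, H.degree v = 1 → H.dist ρ v = r)

/-- The number of paths of length `t` in `H`, i.e. the number of unordered pairs of
vertices at distance exactly `t` from each other. -/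
noncomputable def pathCount {W : Type} [Fintype W] [DecidableEq W] (H : SimpleGraph W) (t : ℕ) : ℕ :=
  (Finset.univ.filter fun p : Sym2 W => ∃ u v : W, p = s(u, v) ∧ H.dist u v = t).card

/-!
A pair of vertices at odd distance `t = 2k - 1` in a rooted tree has endpoints of different
depths. From the deeper endpoint `v`, at depth `e`, the geodesic climbs `j` steps to the lowest
common ancestor `parent^[j] v` and then descends `t - j < j` steps, so `k ≤ j ≤ min t e`. In the
perfect `m`-ary tree the possible other endpoints for a given `j` are the `m ^ (t - j)`
descendants of `parent^[j] v` at relative depth `t - j`, minus the `m ^ (t - j - 1)` of them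
that lie below `parent^[j - 1] v` (when `j < t`). Summed over `j` this telescopes to
`m ^ (k - 1) - m ^ (t - 1 - e)` (the second term only when `e < t`), and summing over the
`m ^ e` vertices of each depth `e ≤ r` gives the formula.
-/

namespace RootedTree

variable {W : Type*} {G : SimpleGraph W} {ρ u v w : W}

open Classical in
noncomputable def parent (G : SimpleGraph W) (ρ v : W) : W :=
  if h : ∃ u, G.Adj v u ∧ G.dist ρ u + 1 = G.dist ρ v then h.choose else ρ

lemma exists_adj_dist_add_one_eq (hT : G.IsTree) (hv : v ≠ ρ) :
    ∃ u, G.Adj v u ∧ G.dist ρ u + 1 = G.dist ρ v := by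
  obtain ⟨p, hp⟩ := hT.connected.exists_walk_length_eq_dist v ρ
  have hnil : ¬ p.Nil := fun h => hv h.eq
  refine ⟨p.snd, p.adj_snd hnil, ?_⟩
  have hle : G.dist p.snd ρ + 1 ≤ G.dist v ρ := by
    rw [← hp, ← p.length_tail_add_one hnil]
    exact Nat.succ_le_succ (dist_le _)
  rw [dist_comm (u := p.snd), dist_comm (u := v)] at hle
  have := hT.dist_eq_dist_add_one_of_adj ρ (p.adj_snd hnil)
  omega

lemma parent_self : parent G ρ ρ = ρ := by
  rw [parent, dif_neg]
  rintro ⟨u, -, hu⟩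
  rw [dist_self] at hu
  omega

lemma adj_parent (hT : G.IsTree) (hv : v ≠ ρ) : G.Adj v (parent G ρ v) := by
  have h := exists_adj_dist_add_one_eq hT hv
  rw [parent, dif_pos h]
  exact h.choose_spec.1

lemma dist_parent_add_one (hT : G.IsTree) (hv : v ≠ ρ) :
    G.dist ρ (parent G ρ v) + 1 = G.dist ρ v := by
  have h := exists_adj_dist_add_one_eq hT hv
  rw [parent, dif_pos h]
  exact h.choose_spec.2

lemma dist_parent (hT : G.IsTree) (v : W) : G.dist ρ (parent G ρ v) = G.dist ρ v - 1 := by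
  rcases eq_or_ne v ρ with rfl | hv
  · simp [parent_self]
  · have := dist_parent_add_one hT hv
    omega

/-- The geodesics from `ρ` to `u` and to `parent v`, extended by the edge to `v`, are both
geodesics to `v`; uniqueness of paths in a tree identifies their last edges. -/
lemma parent_eq_of_adj (hT : G.IsTree) (h : G.Adj v u) (hd : G.dist ρ u + 1 = G.dist ρ v) :
    parent G ρ v = u := by
  have hv : v ≠ ρ := by rintro rfl; simp at hd
  have geodesic_concat : ∀ x (hx : G.Adj v x), G.dist ρ x + 1 = G.dist ρ v →
      ∃ p : G.Walk ρ x, (p.concat hx.symm).IsPath := fun x hx hdx => by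
    obtain ⟨p, hp⟩ := hT.connected.exists_walk_length_eq_dist ρ x
    exact ⟨p, Walk.isPath_of_length_eq_dist _ (by rw [Walk.length_concat, hp, hdx])⟩
  obtain ⟨p, hp⟩ := geodesic_concat u h hd
  obtain ⟨q, hq⟩ := geodesic_concat _ (adj_parent hT hv) (dist_parent_add_one hT hv)
  exact (Walk.concat_inj ((hT.existsUnique_path ρ v).unique hq hp)).1

lemma parent_eq_or_parent_eq_of_adj (hT : G.IsTree) (h : G.Adj u v) :
    (G.dist ρ v = G.dist ρ u + 1 ∧ parent G ρ v = u) ∨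
      (G.dist ρ u = G.dist ρ v + 1 ∧ parent G ρ u = v) := by
  rcases hT.dist_eq_dist_add_one_of_adj ρ h with hd | hd
  · exact Or.inr ⟨hd, parent_eq_of_adj hT h hd.symm⟩
  · exact Or.inl ⟨hd, parent_eq_of_adj hT h.symm hd.symm⟩

lemma dist_iterate_parent (hT : G.IsTree) (v : W) (j : ℕ) :
    G.dist ρ ((parent G ρ)^[j] v) = G.dist ρ v - j := by
  induction j with
  | zero => rfl
  | succ j ih => rw [Function.iterate_succ_apply', dist_parent hT, ih]; omega

lemma iterate_parent_eq_self_of_dist_le (hT : G.IsTree) {j : ℕ} (hj : G.dist ρ v ≤ j) :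
    (parent G ρ)^[j] v = ρ := by
  have h := dist_iterate_parent hT (ρ := ρ) v j
  exact (hT.connected.dist_eq_zero_iff.mp (by omega)).symm

lemma dist_iterate_parent_left (hT : G.IsTree) {j : ℕ} (hj : j ≤ G.dist ρ v) :
    G.dist ((parent G ρ)^[j] v) v = j := by
  have hle : G.dist ((parent G ρ)^[j] v) v ≤ j := by
    clear hj
    induction j with
    | zero => simp
    | succ j ih =>
      rw [Function.iterate_succ_apply']
      set x := (parent G ρ)^[j] v
      rcases eq_or_ne x ρ with hρ | hρ
      · rw [hρ, parent_self, ← hρ]; omega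
      · have : G.dist (parent G ρ x) v ≤ G.dist (parent G ρ x) x + G.dist x v :=
          hT.connected.dist_triangle
        rw [dist_eq_one_iff_adj.mpr (adj_parent hT hρ).symm] at this
        omega
  have : G.dist ρ v ≤ G.dist ρ ((parent G ρ)^[j] v) + G.dist ((parent G ρ)^[j] v) v :=
    hT.connected.dist_triangle
  rw [dist_iterate_parent hT] at this
  omega

def IsAncestor (G : SimpleGraph W) (ρ w u : W) : Prop :=
  (parent G ρ)^[G.dist ρ u - G.dist ρ w] u = w

lemma isAncestor_self : IsAncestor G ρ u u := by simp [IsAncestor]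

lemma IsAncestor.dist_le (h : IsAncestor G ρ w u) : G.dist ρ w ≤ G.dist ρ u := by
  by_contra! hlt
  rw [IsAncestor, Nat.sub_eq_zero_of_le hlt.le, Function.iterate_zero_apply] at h
  subst h
  omega

lemma isAncestor_of_iterate_parent_eq (hT : G.IsTree) {s : ℕ} (h : (parent G ρ)^[s] u = w) :
    IsAncestor G ρ w u := by
  rcases le_or_gt s (G.dist ρ u) with hs | hs
  · have hw := dist_iterate_parent hT (ρ := ρ) u s
    rw [h] at hw
    rw [IsAncestor, hw, Nat.sub_sub_self hs, h]
  · obtain rfl : w = ρ := h ▸ iterate_parent_eq_self_of_dist_le hT hs.le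
    rw [IsAncestor, dist_self, Nat.sub_zero]
    exact iterate_parent_eq_self_of_dist_le hT le_rfl

lemma isAncestor_root (hT : G.IsTree) : IsAncestor G ρ ρ u :=
  isAncestor_of_iterate_parent_eq hT (iterate_parent_eq_self_of_dist_le hT le_rfl)

lemma IsAncestor.trans (hT : G.IsTree) (hwv : IsAncestor G ρ w v) (hvu : IsAncestor G ρ v u) :
    IsAncestor G ρ w u :=
  isAncestor_of_iterate_parent_eq hT (by rw [Function.iterate_add_apply, hvu, hwv])

lemma IsAncestor.of_iterate_parent (hT : G.IsTree) {i j : ℕ} (hij : i ≤ j)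
    (h : IsAncestor G ρ ((parent G ρ)^[i] v) u) : IsAncestor G ρ ((parent G ρ)^[j] v) u := by
  refine IsAncestor.trans hT (isAncestor_of_iterate_parent_eq hT (s := j - i) ?_) h
  rw [← Function.iterate_add_apply, Nat.sub_add_cancel hij]

lemma IsAncestor.dist_eq (hT : G.IsTree) (h : IsAncestor G ρ w u) :
    G.dist w u = G.dist ρ u - G.dist ρ w := by
  have := dist_iterate_parent_left hT (ρ := ρ) (v := u) (Nat.sub_le (G.dist ρ u) (G.dist ρ w))
  rwa [h] at this

lemma IsAncestor.of_walk (hT : G.IsTree) (p : G.Walk u v) (hu : IsAncestor G ρ w u)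
    (hp : parent G ρ w ∉ p.support) : IsAncestor G ρ w v := by
  induction p with
  | nil => exact hu
  | @cons a b c hab q ih =>
    refine ih ?_ (fun hq => hp (List.mem_cons_of_mem _ hq))
    rcases parent_eq_or_parent_eq_of_adj hT hab with ⟨-, hb⟩ | ⟨-, ha⟩
    · exact hu.trans hT (isAncestor_of_iterate_parent_eq hT (s := 1) hb)
    · rcases eq_or_ne a w with rfl | haw
      · refine absurd ?_ hp
        rw [ha, Walk.support_cons]
        exact List.mem_cons_of_mem _ q.start_mem_support
      · obtain ⟨s, hs⟩ : ∃ s, G.dist ρ a - G.dist ρ w = s + 1 :=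
          Nat.exists_eq_add_one.mpr (Nat.pos_of_ne_zero fun h0 => haw (by
            rw [IsAncestor, h0, Function.iterate_zero_apply] at hu; exact hu))
        rw [IsAncestor, hs, Function.iterate_succ_apply, ha] at hu
        exact isAncestor_of_iterate_parent_eq hT hu

/-- Otherwise the geodesic from `parent G ρ v` to `u` passes through `v`, and after `v` it
avoids `parent G ρ v`, so it stays below `v`. -/
lemma dist_eq_dist_parent_add_one (hT : G.IsTree) (h : ¬ IsAncestor G ρ v u) :
    G.dist u v = G.dist u (parent G ρ v) + 1 := by
  have hv : v ≠ ρ := by rintro rfl; exact h (isAncestor_root hT)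
  refine (hT.dist_eq_dist_add_one_of_adj u (adj_parent hT hv)).resolve_right fun hd => h ?_
  obtain ⟨q, hq⟩ := hT.connected.exists_walk_length_eq_dist v u
  have hpath : (Walk.cons (adj_parent hT hv).symm q).IsPath :=
    Walk.isPath_of_length_eq_dist _ (by rw [Walk.length_cons, hq, dist_comm, ← hd, dist_comm])
  exact IsAncestor.of_walk hT q isAncestor_self (Walk.cons_isPath_iff _ _ |>.mp hpath).2

lemma dist_eq_add_dist_iterate_parent (hT : G.IsTree) {j : ℕ}
    (h : ∀ i < j, ¬ IsAncestor G ρ ((parent G ρ)^[i] v) u) :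
    G.dist u v = j + G.dist u ((parent G ρ)^[j] v) := by
  induction j with
  | zero => simp
  | succ j ih =>
    rw [ih (fun i hi => h i (by omega)), Function.iterate_succ_apply',
      dist_eq_dist_parent_add_one hT (h j (by omega))]
    ring

lemma exists_least_isAncestor_iterate_parent (hT : G.IsTree) (u v : W) :
    ∃ j ≤ G.dist ρ v, IsAncestor G ρ ((parent G ρ)^[j] v) u ∧
      ∀ i < j, ¬ IsAncestor G ρ ((parent G ρ)^[i] v) u := by
  classical
  have hroot : IsAncestor G ρ ((parent G ρ)^[G.dist ρ v] v) u :=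
    iterate_parent_eq_self_of_dist_le hT le_rfl ▸ isAncestor_root hT
  have hex : ∃ j, IsAncestor G ρ ((parent G ρ)^[j] v) u := ⟨_, hroot⟩
  exact ⟨Nat.find hex, Nat.find_min' hex hroot, Nat.find_spec hex,
    fun i hi => Nat.find_min hex hi⟩

/-- `(parent G ρ)^[j] v` is the lowest common ancestor of `u` and `v`. -/
lemma dist_add_two_mul_dist_eq (hT : G.IsTree) {j : ℕ}
    (hj : j ≤ G.dist ρ v) (hanc : IsAncestor G ρ ((parent G ρ)^[j] v) u)
    (hmin : ∀ i < j, ¬ IsAncestor G ρ ((parent G ρ)^[i] v) u) :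
    G.dist u v + 2 * G.dist ρ ((parent G ρ)^[j] v) = G.dist ρ u + G.dist ρ v := by
  have hle := hanc.dist_le
  have hdist := hanc.dist_eq hT
  rw [dist_comm] at hdist
  rw [dist_eq_add_dist_iterate_parent hT hmin, hdist]
  rw [dist_iterate_parent hT] at hle ⊢
  omega

lemma even_dist_add_dist_add_dist (hT : G.IsTree) (u v : W) :
    Even (G.dist ρ u + G.dist ρ v + G.dist u v) := by
  obtain ⟨j, hj, hanc, hmin⟩ := exists_least_isAncestor_iterate_parent hT (ρ := ρ) u v
  have := dist_add_two_mul_dist_eq hT hj hanc hmin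
  exact ⟨G.dist u v + G.dist ρ ((parent G ρ)^[j] v), by omega⟩

section Finite

variable [Fintype W] [DecidableEq W] {s t : ℕ}

noncomputable def descendants (G : SimpleGraph W) (ρ w : W) (s : ℕ) : Finset W :=
  univ.filter fun u => G.dist ρ u = G.dist ρ w + s ∧ (parent G ρ)^[s] u = w

lemma mem_descendants :
    u ∈ descendants G ρ w s ↔ G.dist ρ u = G.dist ρ w + s ∧ (parent G ρ)^[s] u = w := by
  simp [descendants]

lemma mem_descendants_iff_isAncestor :
    u ∈ descendants G ρ w s ↔ G.dist ρ u = G.dist ρ w + s ∧ IsAncestor G ρ w u := by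
  rw [mem_descendants, IsAncestor, and_congr_right_iff]
  intro h
  rw [h, Nat.add_sub_cancel_left]

lemma descendants_zero : descendants G ρ w 0 = {w} := by
  ext u
  simp only [mem_descendants, add_zero, Function.iterate_zero_apply, mem_singleton]
  exact ⟨And.right, by rintro rfl; exact ⟨rfl, rfl⟩⟩

lemma descendants_succ (hT : G.IsTree) :
    descendants G ρ w (s + 1) = (descendants G ρ w s).biUnion (descendants G ρ · 1) := by
  ext u
  simp only [mem_biUnion, mem_descendants, Function.iterate_one]
  constructor
  · rintro ⟨hd, hu⟩
    have := dist_parent hT (ρ := ρ) u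
    rw [Function.iterate_succ_apply] at hu
    exact ⟨parent G ρ u, ⟨by omega, hu⟩, by omega, rfl⟩
  · rintro ⟨c, ⟨hc, hcw⟩, hu, rfl⟩
    exact ⟨by omega, by rwa [Function.iterate_succ_apply]⟩

lemma disjoint_descendants {w' : W} (h : w ≠ w') :
    Disjoint (descendants G ρ w s) (descendants G ρ w' s) := by
  rw [Finset.disjoint_left]
  intro u hu hu'
  exact h ((mem_descendants.mp hu).2.symm.trans (mem_descendants.mp hu').2)

lemma adj_iff_mem_descendants_one_or_eq_parent (hT : G.IsTree) :
    G.Adj v u ↔ u ∈ descendants G ρ v 1 ∨ (v ≠ ρ ∧ u = parent G ρ v) := by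
  rw [mem_descendants, Function.iterate_one]
  constructor
  · intro h
    rcases parent_eq_or_parent_eq_of_adj hT h with h' | ⟨hd, hp⟩
    · exact Or.inl h'
    · exact Or.inr ⟨by rintro rfl; simp at hd, hp.symm⟩
  · rintro (⟨hd, rfl⟩ | ⟨hv, rfl⟩)
    · exact (adj_parent hT (by rintro rfl; simp at hd)).symm
    · exact adj_parent hT hv

lemma degree_eq_card_descendants_one (hT : G.IsTree) [DecidableRel G.Adj] (v : W) :
    G.degree v = #(descendants G ρ v 1) + if v = ρ then 0 else 1 := by
  rw [← card_neighborFinset_eq_degree]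
  split_ifs with hv
  · congr 1
    ext u
    simp [adj_iff_mem_descendants_one_or_eq_parent hT (ρ := ρ), hv]
  · have hnot : parent G ρ v ∉ descendants G ρ v 1 := fun h => by
      have := dist_parent_add_one hT hv
      rw [mem_descendants] at h
      omega
    rw [← card_insert_of_notMem hnot]
    congr 1
    ext u
    rw [mem_neighborFinset, adj_iff_mem_descendants_one_or_eq_parent hT (ρ := ρ), mem_insert]
    tauto

noncomputable instance : DecidableRel (IsAncestor G ρ) :=
  fun _ _ => inferInstanceAs (Decidable (_ = _))

noncomputable def shallowerAtDist (G : SimpleGraph W) (ρ v : W) (t : ℕ) : Finset W :=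
  univ.filter fun u => G.dist u v = t ∧ G.dist ρ u < G.dist ρ v

/-- The endpoints `u` of the geodesics of length `t` from `v` whose highest vertex is
`(parent G ρ)^[j] v`. -/
noncomputable def apexSet (G : SimpleGraph W) (ρ v : W) (t j : ℕ) : Finset W :=
  (descendants G ρ ((parent G ρ)^[j] v) (t - j)).filter
    fun u => ¬ IsAncestor G ρ ((parent G ρ)^[j - 1] v) u

/-- `j` is the number of steps the geodesic from `v` to `u` climbs before it descends. -/
lemma shallowerAtDist_eq_biUnion (hT : G.IsTree) {k : ℕ} (ht : t + 1 = 2 * k) :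
    shallowerAtDist G ρ v t = (Icc k (min t (G.dist ρ v))).biUnion (apexSet G ρ v t) := by
  ext u
  simp only [shallowerAtDist, apexSet, mem_filter, mem_univ, true_and, mem_biUnion, mem_Icc,
    le_min_iff, mem_descendants_iff_isAncestor, dist_iterate_parent hT]
  constructor
  · rintro ⟨hdist, hlt⟩
    obtain ⟨j, hj, hanc, hmin⟩ := exists_least_isAncestor_iterate_parent hT (ρ := ρ) u v
    have hformula := dist_add_two_mul_dist_eq hT hj hanc hmin
    have hle := hanc.dist_le
    rw [dist_iterate_parent hT] at hformula hle
    exact ⟨j, ⟨by omega, by omega, hj⟩, ⟨by omega, hanc⟩, hmin _ (by omega)⟩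
  · rintro ⟨j, ⟨hkj, hjt, hj⟩, ⟨hdu, hanc⟩, hnot⟩
    have hmin : ∀ i < j, ¬ IsAncestor G ρ ((parent G ρ)^[i] v) u :=
      fun i hi h => hnot (h.of_iterate_parent hT (by omega))
    have hformula := dist_add_two_mul_dist_eq hT hj hanc hmin
    rw [dist_iterate_parent hT] at hformula
    omega

open Function in
lemma pairwise_disjoint_apexSet (hT : G.IsTree) : Pairwise (Disjoint on apexSet G ρ v t) := by
  intro i j hij
  wlog hlt : i < j generalizing i j
  · exact (this hij.symm (by omega)).symm
  simp only [Function.onFun, Finset.disjoint_left]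
  intro u hu hu'
  simp only [apexSet, mem_filter, mem_descendants_iff_isAncestor] at hu hu'
  exact hu'.2 (hu.1.2.of_iterate_parent hT (by omega))

end Finite

end RootedTree

open RootedTree

lemma pathCount_eq_sum_card_shallowerAtDist {W : Type} [Fintype W] [DecidableEq W]
    {G : SimpleGraph W} {t : ℕ} (hT : G.IsTree) (ρ : W) (ht : Odd t) :
    pathCount G t = ∑ v, #(shallowerAtDist G ρ v t) := by
  rw [pathCount, ← card_sigma]
  symm
  refine card_bij (fun p _ => s(p.2, p.1)) ?_ ?_ ?_
  · rintro ⟨v, u⟩ h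
    simp only [mem_sigma, shallowerAtDist, mem_filter, mem_univ, true_and] at h
    simp only [mem_filter, mem_univ, true_and]
    exact ⟨u, v, rfl, h.1⟩
  · rintro ⟨v, u⟩ h ⟨v', u'⟩ h' heq
    simp only [mem_sigma, shallowerAtDist, mem_filter, mem_univ, true_and] at h h'
    dsimp only at h h' heq
    rcases Sym2.eq_iff.mp heq with ⟨rfl, rfl⟩ | ⟨rfl, rfl⟩
    · rfl
    · omega
  · rintro _ hp
    simp only [mem_filter, mem_univ, true_and] at hp
    obtain ⟨u, v, rfl, huv⟩ := hp
    have hne : G.dist ρ u ≠ G.dist ρ v := fun h => by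
      have heven := even_dist_add_dist_add_dist hT (ρ := ρ) u v
      rw [h, huv, Nat.even_add, ← two_mul] at heven
      exact Nat.not_even_iff_odd.mpr ht (heven.mp (even_two_mul _))
    rcases hne.lt_or_gt with h | h
    · exact ⟨⟨v, u⟩, by simp [shallowerAtDist, huv, h], rfl⟩
    · refine ⟨⟨u, v⟩, ?_, Sym2.eq_swap⟩
      simp [shallowerAtDist, SimpleGraph.dist_comm (u := v), huv, h]

lemma sum_Icc_pow_sub_pow {R : Type*} [CommRing R] (x : R) {k t J : ℕ} (hk : 1 ≤ k)
    (hkt : k ≤ t) (hkJ : k - 1 ≤ J) (hJt : J ≤ t) :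
    ∑ j ∈ Icc k J, (x ^ (t - j) - if j < t then x ^ (t - j - 1) else 0) =
      x ^ (t - k) - if J < t then x ^ (t - 1 - J) else 0 := by
  induction J, hkJ using Nat.le_induction with
  | base =>
    rw [Icc_eq_empty (by omega), sum_empty, if_pos (by omega),
      show t - 1 - (k - 1) = t - k by omega, sub_self]
  | succ J hJ ih =>
    rw [sum_Icc_succ_top (by omega), ih (by omega), if_pos (show J < t by omega),
      show t - 1 - J = t - (J + 1) by omega, show t - (J + 1) - 1 = t - 1 - (J + 1) by omega]
    ring

lemma sum_range_pow_mul_eq {K : Type*} [Field K] (x : K) (hx : x ≠ 1) {k t r : ℕ}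
    (ht : t + 1 = 2 * k) (hr : t ≤ r) :
    ∑ e ∈ range (r + 1), x ^ e *
        (if k ≤ e then x ^ (k - 1) - (if e < t then x ^ (t - 1 - e) else 0) else 0) =
      x ^ (2 * k - 2) * ((x ^ (r - k + 2) - 1) / (x - 1) - k) := by
  obtain ⟨a, rfl⟩ : ∃ a, k = a + 1 := ⟨k - 1, by omega⟩
  obtain rfl : t = 2 * a + 1 := by omega
  obtain ⟨s, rfl⟩ : ∃ s, r = a + s := ⟨r - a, by omega⟩
  have hterm : ∀ i ∈ range s, x ^ (a + 1 + i) * (if a + 1 ≤ a + 1 + i then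
      x ^ (a + 1 - 1) - (if a + 1 + i < 2 * a + 1 then x ^ (2 * a + 1 - 1 - (a + 1 + i)) else 0)
      else 0) = x ^ (2 * a + 1) * x ^ i - if i < a then x ^ (2 * a) else 0 := by
    intro i _
    rw [if_pos (by omega), Nat.add_sub_cancel, mul_sub, ← pow_add, ← pow_add,
      show a + 1 + i + a = 2 * a + 1 + i by ring]
    congr 1
    split_ifs with h h'
    · rw [← pow_add]; congr 1; omega
    · omega
    · omega
    · rw [mul_zero]
  have hcount : ∑ i ∈ range s, (if i < a then x ^ (2 * a) else 0) = a * x ^ (2 * a) := by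
    rw [sum_ite, sum_const_zero, add_zero, sum_const, nsmul_eq_mul,
      show (range s).filter (· < a) = range a by ext; simp; omega, card_range]
  rw [show a + s + 1 = a + 1 + s by ring, sum_range_add, sum_eq_zero fun e he => by
      rw [if_neg (by simp at he; omega), mul_zero], zero_add, sum_congr rfl hterm,
    sum_sub_distrib, ← mul_sum, geom_sum_eq hx, hcount,
    show 2 * (a + 1) - 2 = 2 * a by omega, show a + s - (a + 1) + 2 = s + 1 by omega]
  have hx' : x - 1 ≠ 0 := sub_ne_zero.mpr hx
  field_simp
  push_cast
  ring

section Perfect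

variable {W : Type} [Fintype W] {G : SimpleGraph W} [DecidableRel G.Adj] {ρ : W} {m r : ℕ}

lemma IsPerfectRootedMary.isTree (hG : IsPerfectRootedMary m r G ρ) : G.IsTree := hG.1

lemma IsPerfectRootedMary.dist_le (hG : IsPerfectRootedMary m r G ρ) (v : W) :
    G.dist ρ v ≤ r :=
  hG.2.2.2.1 v

variable [DecidableEq W] {v w : W} {s : ℕ}

lemma IsPerfectRootedMary.card_descendants_one (hG : IsPerfectRootedMary m r G ρ)
    (hv : G.dist ρ v < r) : #(descendants G ρ v 1) = m := by
  obtain ⟨hT, hroot, hdeg, -, -, hleaf⟩ := hG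
  have hcard := degree_eq_card_descendants_one hT (ρ := ρ) v
  split_ifs at hcard with hvρ
  · subst hvρ
    rw [← hroot (by omega), hcard, add_zero]
  · rcases hdeg v hvρ with h | h
    · have := hleaf v h
      omega
    · omega

lemma IsPerfectRootedMary.card_descendants (hG : IsPerfectRootedMary m r G ρ)
    (h : G.dist ρ w + s ≤ r) : #(descendants G ρ w s) = m ^ s := by
  induction s with
  | zero => simp [descendants_zero]
  | succ s ih =>
    rw [descendants_succ hG.isTree, card_biUnion fun c _ c' _ hc => disjoint_descendants hc,
      sum_congr rfl fun c hc => hG.card_descendants_one (by rw [mem_descendants] at hc; omega),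
      sum_const, ih (by omega), smul_eq_mul, pow_succ]

lemma IsPerfectRootedMary.sum_comp_dist {R : Type*} [CommSemiring R]
    (hG : IsPerfectRootedMary m r G ρ) (f : ℕ → R) :
    ∑ v, f (G.dist ρ v) = ∑ e ∈ range (r + 1), (m : R) ^ e * f e := by
  rw [← sum_fiberwise_of_maps_to (t := range (r + 1)) (g := G.dist ρ)
    fun v _ => mem_range.mpr (Nat.lt_succ_of_le (hG.dist_le v))]
  refine sum_congr rfl fun e he => ?_
  have hlevel : (univ.filter fun v => G.dist ρ v = e) = descendants G ρ ρ e := by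
    ext v
    simp [mem_descendants_iff_isAncestor, isAncestor_root hG.isTree]
  rw [sum_congr rfl fun v hv => by rw [(mem_filter.mp hv).2], sum_const, hlevel,
    hG.card_descendants (by simpa using mem_range_succ_iff.mp he), nsmul_eq_mul, Nat.cast_pow]

lemma IsPerfectRootedMary.card_apexSet_add (hG : IsPerfectRootedMary m r G ρ) {t j : ℕ}
    (hj : 1 ≤ j) (hjt : j ≤ t) (hjv : j ≤ G.dist ρ v) (htj : t < 2 * j) :
    #(apexSet G ρ v t j) + (if j < t then m ^ (t - j - 1) else 0) = m ^ (t - j) := by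
  have hT := hG.isTree
  have hdepth := hG.dist_le v
  have hw := dist_iterate_parent hT (ρ := ρ) v j
  have hw' := dist_iterate_parent hT (ρ := ρ) v (j - 1)
  have hsplit := card_filter_add_card_filter_not
    (s := descendants G ρ ((parent G ρ)^[j] v) (t - j))
    (IsAncestor G ρ ((parent G ρ)^[j - 1] v))
  rw [hG.card_descendants (by omega)] at hsplit
  rw [apexSet, ← hsplit, add_comm]
  congr 1
  split_ifs with hjt'
  · rw [← hG.card_descendants (w := (parent G ρ)^[j - 1] v) (s := t - j - 1) (by omega)]
    congr 1
    ext u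
    simp only [mem_filter, mem_descendants_iff_isAncestor, hw, hw']
    constructor
    · rintro ⟨hu, hanc⟩
      exact ⟨⟨by omega, hanc.of_iterate_parent hT (by omega)⟩, hanc⟩
    · rintro ⟨⟨hu, -⟩, hanc⟩
      exact ⟨by omega, hanc⟩
  · refine (card_eq_zero.mpr (filter_eq_empty_iff.mpr fun u hu hanc => ?_)).symm
    have := hanc.dist_le
    rw [mem_descendants] at hu
    omega

lemma IsPerfectRootedMary.card_shallowerAtDist (hG : IsPerfectRootedMary m r G ρ) {t k : ℕ}
    (ht : t + 1 = 2 * k) (v : W) :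
    (#(shallowerAtDist G ρ v t) : ℚ) = if k ≤ G.dist ρ v then (m : ℚ) ^ (k - 1) -
      (if G.dist ρ v < t then (m : ℚ) ^ (t - 1 - G.dist ρ v) else 0) else 0 := by
  have hterm : ∀ j ∈ Icc k (min t (G.dist ρ v)), (#(apexSet G ρ v t j) : ℚ) =
      (m : ℚ) ^ (t - j) - if j < t then (m : ℚ) ^ (t - j - 1) else 0 := by
    intro j hj
    rw [mem_Icc, le_min_iff] at hj
    rw [eq_sub_iff_add_eq]
    exact_mod_cast hG.card_apexSet_add (by omega) hj.2.1 hj.2.2 (by omega)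
  rw [shallowerAtDist_eq_biUnion hG.isTree ht,
    card_biUnion ((pairwise_disjoint_apexSet hG.isTree).pairwiseDisjoint _), Nat.cast_sum,
    sum_congr rfl hterm]
  by_cases hkv : k ≤ G.dist ρ v
  · rw [if_pos hkv, sum_Icc_pow_sub_pow _ (by omega) (by omega) (by omega) (min_le_left _ _),
      show t - k = k - 1 by omega]
    rcases le_total t (G.dist ρ v) with h | h
    · simp [min_eq_left h, not_lt.mpr h]
    · rw [min_eq_right h]
  · rw [if_neg hkv, Icc_eq_empty (by omega), sum_empty]

lemma IsPerfectRootedMary.sum_card_shallowerAtDist (hG : IsPerfectRootedMary m r G ρ)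
    {t k : ℕ} (ht : t + 1 = 2 * k) :
    ∑ v, (#(shallowerAtDist G ρ v t) : ℚ) = ∑ e ∈ range (r + 1), (m : ℚ) ^ e *
      if k ≤ e then (m : ℚ) ^ (k - 1) - (if e < t then (m : ℚ) ^ (t - 1 - e) else 0)
      else 0 := by
  rw [← hG.sum_comp_dist]
  exact sum_congr rfl fun v _ => hG.card_shallowerAtDist ht v

end Perfect

theorem rooted_odd_paths_large_depth (m k r : ℕ) (hm : 2 ≤ m)
    (hk : 1 ≤ k) (hr : 2 * k - 1 ≤ r)
    {W : Type} [Fintype W] [DecidableEq W] (G : SimpleGraph W) [DecidableRel G.Adj]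
    (ρ : W) (hG : IsPerfectRootedMary m r G ρ) :
    (pathCount G (2 * k - 1) : ℚ) =
      (m : ℚ) ^ (2 * k - 2) *
        (((m : ℚ) ^ (r - k + 2) - 1) / ((m : ℚ) - 1) - (k : ℚ)) := by
  have ht : 2 * k - 1 + 1 = 2 * k := by omega
  have hm1 : (m : ℚ) ≠ 1 := by exact_mod_cast (show m ≠ 1 by omega)
  rw [pathCount_eq_sum_card_shallowerAtDist hG.isTree ρ ⟨k - 1, by omega⟩, Nat.cast_sum,
    hG.sum_card_shallowerAtDist ht]
  exact sum_range_pow_mul_eq (m : ℚ) hm1 ht hr
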